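/- Special case for uniform variables: let ξ₁ ≤ ξ₂ ≤ ⋯ ≤ ξ_m be the order statistics of m independent random variables uniformly distributed on [0, 1]. Then the random variables η_i = ξ_i / ξ_{i+1} for i = 1, …, m−1, together with ξ_m, are mutually independent, and each η_i has cumulative distribution function x ↦ x^i on [0, 1] (density proportional to x^{i−1}). -/

import Mathlib

/-!
Let `ζ` be the sample and `ξ = ζ ∘ sort ζ`. For `x ∈ [0,1]^m`, the event `η_i ≤ x_i` (all `i`,
with `η_m = ξ_m`) says that the sorted tuple lies in the chain set
`C(x) = {t | 0 ≤ t_i ≤ x_i t_{i+1}, t_m ≤ x_m}`. As `x ≤ 1`, every point of `C(x)` is sorted, so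
when the `ζ_i` are distinct (almost surely) exactly one of the `m!` rearrangements of `ζ` lies in
`C(x)`, and the probability is `m! · vol C(x)`. The slices of `C(x)` along the last coordinate
`s` are the chain sets of one dimension less with top value `s`, which gives
`vol C(x) = ∏ x_i ^ i / m!` by induction. So the joint distribution function of the `η_i` and
`ξ_m` is `∏ x_i ^ i` on the unit cube; as these variables lie in `(0, 1]` almost surely, it
determines their joint law, which is therefore the product of the marginals.
-/

open MeasureTheory ProbabilityTheory Set Function
open scoped Nat

namespace UniformOrderStatistics

/-- `Fin.snoc t u i.succ` is `t (i + 1)`, and `u` for the last index. -/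
def chainSet {n : ℕ} (y : Fin n → ℝ) (u : ℝ) : Set (Fin n → ℝ) :=
  {t | ∀ i, 0 ≤ t i ∧ t i ≤ y i * (Fin.snoc t u : Fin (n + 1) → ℝ) i.succ}

def permutedChainSet {n : ℕ} (y : Fin n → ℝ) (u : ℝ) : Set (Fin n → ℝ) :=
  ⋃ σ : Equiv.Perm (Fin n), (· ∘ σ) ⁻¹' chainSet y u

noncomputable def succRatio {n : ℕ} (s : Fin n → ℝ) (i : Fin n) : ℝ :=
  s i / (Fin.snoc s 1 : Fin (n + 1) → ℝ) i.succ

noncomputable def uniformCube (ι : Type*) [Fintype ι] : Measure (ι → ℝ) :=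
  Measure.pi fun _ => volume.restrict (Icc 0 1)

section ChainSet

variable {n : ℕ} {y : Fin n → ℝ} {u : ℝ} {t : Fin n → ℝ}

lemma continuous_snoc (u : ℝ) : Continuous fun t : Fin n → ℝ => (Fin.snoc t u : Fin (n + 1) → ℝ) :=
  Continuous.finSnoc (A := fun _ => ℝ) continuous_id continuous_const

lemma isClosed_chainSet (y : Fin n → ℝ) (u : ℝ) : IsClosed (chainSet y u) := by
  simp only [chainSet, ofPred_forall]
  exact isClosed_iInter fun i => (isClosed_le continuous_const (continuous_apply i)).inter
    (isClosed_le (continuous_apply i)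
      (continuous_const.mul ((continuous_apply i.succ).comp (continuous_snoc u))))

lemma measurableSet_permutedChainSet (y : Fin n → ℝ) (u : ℝ) :
    MeasurableSet (permutedChainSet y u) :=
  .iUnion fun _ => (isClosed_chainSet y u).measurableSet.preimage <|
    measurable_pi_lambda _ fun _ => measurable_pi_apply _

lemma snoc_mem_chainSet_iff {y : Fin (n + 1) → ℝ} {s : ℝ} :
    (Fin.snoc t s : Fin (n + 1) → ℝ) ∈ chainSet y u ↔
      (0 ≤ s ∧ s ≤ y (Fin.last n) * u) ∧ t ∈ chainSet (Fin.init y) s := by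
  simp [chainSet, Fin.forall_fin_succ', Fin.init, Fin.succ_castSucc, -Fin.castSucc_succ, and_comm]

lemma lintegral_Icc_ofReal_pow {c : ℝ} (hc : 0 ≤ c) (k : ℕ) :
    ∫⁻ s in Icc 0 c, ENNReal.ofReal (s ^ k) = ENNReal.ofReal (c ^ (k + 1) / (k + 1)) := by
  rw [← ofReal_integral_eq_lintegral_ofReal, integral_Icc_eq_integral_Ioc,
    ← intervalIntegral.integral_of_le hc, integral_pow]
  · simp
  · exact (continuous_pow k).integrableOn_Icc
  · filter_upwards [ae_restrict_mem measurableSet_Icc] with s hs using pow_nonneg hs.1 k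

lemma volume_chainSet_eq_lintegral {y : Fin (n + 1) → ℝ} :
    volume (chainSet y u) =
      ∫⁻ s in Icc 0 (y (Fin.last n) * u), volume (chainSet (Fin.init y) s) := by
  set e := MeasurableEquiv.piFinSuccAbove (fun _ : Fin (n + 1) => ℝ) (Fin.last n)
  have hC := (isClosed_chainSet y u).measurableSet
  have he : ∀ s t, e.symm (s, t) = Fin.snoc t s := fun s t => by
    simp [e, MeasurableEquiv.piFinSuccAbove_symm_apply, Fin.snocEquiv]
  rw [← (volume_preserving_piFinSuccAbove (fun _ => ℝ) (Fin.last n)).symm.measure_preimage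
    hC.nullMeasurableSet, Measure.volume_eq_prod,
    Measure.prod_apply (hC.preimage e.symm.measurable), ← lintegral_indicator measurableSet_Icc]
  congr 1 with s
  by_cases hs : s ∈ Icc 0 (y (Fin.last n) * u)
  · simp [preimage, he, snoc_mem_chainSet_iff, hs.1, hs.2]
  · simp [preimage, he, snoc_mem_chainSet_iff, mem_Icc.not.1 hs]

lemma volume_chainSet (hy : ∀ i, 0 ≤ y i) (hu : 0 ≤ u) :
    volume (chainSet y u) = ENNReal.ofReal ((∏ i, y i ^ ((i : ℕ) + 1)) * u ^ n / n !) := by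
  induction n generalizing u with
  | zero =>
    simp only [chainSet, IsEmpty.forall_iff, ofPred_true]
    rw [← pi_univ univ, volume_pi_pi]
    simp
  | succ n ih =>
    have hP : 0 ≤ (∏ i : Fin n, Fin.init y i ^ ((i : ℕ) + 1)) / n ! :=
      div_nonneg (Finset.prod_nonneg fun i _ => pow_nonneg (hy _) _) (Nat.cast_nonneg _)
    rw [volume_chainSet_eq_lintegral, setLIntegral_congr_fun measurableSet_Icc
      fun s hs => ih (y := Fin.init y) (fun i => hy _) hs.1]
    simp_rw [mul_div_right_comm _ (_ ^ n), ENNReal.ofReal_mul hP]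
    rw [lintegral_const_mul' _ _ ENNReal.ofReal_ne_top,
      lintegral_Icc_ofReal_pow (mul_nonneg (hy _) hu), ← ENNReal.ofReal_mul hP,
      Fin.prod_univ_castSucc, Nat.factorial_succ]
    congr 1
    simp only [Fin.init, Fin.val_last, Fin.val_castSucc]
    push_cast
    field_simp
    ring

lemma monotone_snoc_of_mem_chainSet (hy : ∀ i, y i ≤ 1) (hu : 0 ≤ u) (ht : t ∈ chainSet y u) :
    Monotone (Fin.snoc t u : Fin (n + 1) → ℝ) := by
  have hnonneg : ∀ j, 0 ≤ (Fin.snoc t u : Fin (n + 1) → ℝ) j :=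
    fun j => Fin.lastCases (by simpa using hu) (fun j => by simpa using (ht j).1) j
  refine Fin.monotone_iff_le_succ.2 fun i => ?_
  rw [Fin.snoc_castSucc]
  exact (ht i).2.trans (mul_le_of_le_one_left (hnonneg _) (hy i))

lemma monotone_of_mem_chainSet (hy : ∀ i, y i ≤ 1) (hu : 0 ≤ u) (ht : t ∈ chainSet y u) :
    Monotone t := fun i j hij => by
  simpa using monotone_snoc_of_mem_chainSet hy hu ht (Fin.castSucc_le_castSucc_iff.2 hij)

lemma chainSet_subset_pi_Icc (hy : ∀ i, y i ≤ 1) (hu : 0 ≤ u) :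
    chainSet y u ⊆ univ.pi fun _ => Icc 0 u := fun t ht i _ => by
  refine ⟨(ht i).1, ?_⟩
  simpa using monotone_snoc_of_mem_chainSet hy hu ht (Fin.castSucc_lt_last i).le

lemma comp_sort_mem_chainSet_iff (hy : ∀ i, y i ≤ 1) (hu : 0 ≤ u) :
    t ∘ Tuple.sort t ∈ chainSet y u ↔ t ∈ permutedChainSet y u := by
  simp only [permutedChainSet, mem_iUnion, mem_preimage]
  refine ⟨fun h => ⟨_, h⟩, fun ⟨σ, hσ⟩ => ?_⟩
  rwa [Tuple.comp_sort_eq_comp_iff_monotone.2 (monotone_of_mem_chainSet hy hu hσ)] at hσ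

end ChainSet

section SuccRatio

variable {n : ℕ} {s : Fin n → ℝ}

lemma succRatio_apply (s : Fin n → ℝ) (i : Fin n) :
    succRatio s i = if h : (i : ℕ) + 1 < n then s i / s ⟨(i : ℕ) + 1, h⟩ else s i := by
  by_cases h : (i : ℕ) + 1 < n <;> simp [succRatio, Fin.snoc, h]; rfl

lemma measurable_succRatio (i : Fin n) : Measurable fun s : Fin n → ℝ => succRatio s i :=
  (measurable_pi_apply i).div ((continuous_apply i.succ).comp (continuous_snoc 1)).measurable

lemma snoc_one_pos (hs : ∀ i, 0 < s i) (j : Fin (n + 1)) :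
    0 < (Fin.snoc s 1 : Fin (n + 1) → ℝ) j :=
  Fin.lastCases (by simp) (fun j => by simpa using hs j) j

lemma succRatio_pos (hs : ∀ i, 0 < s i) (i : Fin n) : 0 < succRatio s i :=
  div_pos (hs i) (snoc_one_pos hs _)

lemma forall_succRatio_le_iff (hs : ∀ i, 0 < s i) {x : Fin n → ℝ} :
    (∀ i, succRatio s i ≤ x i) ↔ s ∈ chainSet x 1 := by
  simp only [succRatio, div_le_iff₀ (snoc_one_pos hs _), chainSet, mem_ofPred_eq,
    fun i => (hs i).le, true_and]

lemma forall_succRatio_comp_sort_le_iff {t x : Fin n → ℝ} (ht : ∀ i, 0 < t i)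
    (hx : ∀ i, x i ≤ 1) :
    (∀ i, succRatio (t ∘ Tuple.sort t) i ≤ x i) ↔ t ∈ permutedChainSet x 1 := by
  rw [forall_succRatio_le_iff (s := t ∘ Tuple.sort t) fun i => ht _,
    comp_sort_mem_chainSet_iff hx zero_le_one]

end SuccRatio

lemma measurePreserving_comp_perm {ι α : Type*} [Fintype ι] [MeasurableSpace α] (μ : Measure α)
    [SigmaFinite μ] (σ : Equiv.Perm ι) :
    MeasurePreserving (fun t : ι → α => t ∘ σ) (Measure.pi fun _ => μ) (Measure.pi fun _ => μ) :=
  measurePreserving_arrowCongr' (fun _ => μ) (fun _ => μ) σ.symm (MeasurableEquiv.refl α)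
    fun _ => MeasurePreserving.id μ

lemma ae_injective_volume {ι : Type*} [Fintype ι] : ∀ᵐ t : ι → ℝ, Injective t := by
  classical
  have hdiag : ∀ i j : ι, i ≠ j → volume {t : ι → ℝ | t i = t j} = 0 := by
    intro i j hij
    let L : (ι → ℝ) →ₗ[ℝ] ℝ := (LinearMap.proj i : (ι → ℝ) →ₗ[ℝ] ℝ) - LinearMap.proj j
    have hL : L.ker ≠ ⊤ := fun h => by
      simpa [L, hij] using LinearMap.congr_fun (LinearMap.ker_eq_top.1 h) (Pi.single i 1)
    convert Measure.addHaar_submodule volume L.ker hL using 2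
    ext t
    simp [L, sub_eq_zero]
  rw [ae_iff]
  refine measure_mono_null (fun t ht => ?_)
    (measure_iUnion_null fun i => measure_iUnion_null fun j => measure_iUnion_null (hdiag i j))
  simp only [Injective, not_forall, mem_ofPred_eq] at ht
  obtain ⟨i, j, hij, hne⟩ := ht
  exact mem_iUnion.2 ⟨i, mem_iUnion.2 ⟨j, mem_iUnion.2 ⟨hne, hij⟩⟩⟩

section UniformCube

variable {ι : Type*} [Fintype ι]

lemma uniformCube_eq_restrict : uniformCube ι = volume.restrict (univ.pi fun _ => Icc 0 1) := by
  rw [uniformCube, volume_pi, Measure.restrict_pi_pi]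

lemma ae_injective_uniformCube : ∀ᵐ t ∂uniformCube ι, Injective t := by
  rw [uniformCube_eq_restrict]
  exact ae_restrict_of_ae ae_injective_volume

lemma ae_pos_uniformCube : ∀ᵐ t ∂uniformCube ι, ∀ i, 0 < t i := by
  have hpos : ∀ᵐ s ∂(volume.restrict (Icc (0 : ℝ) 1)), 0 < s := by
    rw [← Measure.restrict_congr_set Ioc_ae_eq_Icc]
    exact (ae_restrict_mem measurableSet_Ioc).mono fun s hs => hs.1
  exact ae_all_iff.2 fun i => Measure.tendsto_eval_ae_ae.eventually hpos

end UniformCube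

section PermutedChainSet

variable {m : ℕ} {x : Fin m → ℝ}

lemma uniformCube_comp_perm_preimage_chainSet (hx0 : ∀ i, 0 ≤ x i) (hx1 : ∀ i, x i ≤ 1)
    (σ : Equiv.Perm (Fin m)) :
    uniformCube (Fin m) ((· ∘ σ) ⁻¹' chainSet x 1) =
      ENNReal.ofReal ((∏ i, x i ^ ((i : ℕ) + 1)) / m !) := by
  have hC := (isClosed_chainSet x 1).measurableSet
  calc uniformCube (Fin m) ((· ∘ σ) ⁻¹' chainSet x 1)
      = uniformCube (Fin m) (chainSet x 1) :=
        (measurePreserving_comp_perm _ σ).measure_preimage hC.nullMeasurableSet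
    _ = volume (chainSet x 1) := by
        rw [uniformCube_eq_restrict, Measure.restrict_apply hC,
          inter_eq_left.2 (chainSet_subset_pi_Icc hx1 zero_le_one)]
    _ = _ := by rw [volume_chainSet hx0 zero_le_one, one_pow, mul_one]

lemma uniformCube_permutedChainSet (hx0 : ∀ i, 0 ≤ x i) (hx1 : ∀ i, x i ≤ 1) :
    uniformCube (Fin m) (permutedChainSet x 1) = ∏ i, ENNReal.ofReal (x i ^ ((i : ℕ) + 1)) := by
  -- two rearrangements of an injective tuple cannot both be sorted
  have hdisj : Pairwise (AEDisjoint (uniformCube (Fin m)) on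
      fun σ : Equiv.Perm (Fin m) => (· ∘ σ) ⁻¹' chainSet x 1) := by
    intro σ τ hστ
    refine measure_mono_null ?_ (ae_iff.1 ae_injective_uniformCube)
    rintro t ⟨hσ, hτ⟩ ht
    refine hστ (Equiv.ext fun i => ht ?_)
    exact congrFun (Tuple.unique_monotone (monotone_of_mem_chainSet hx1 zero_le_one hσ)
      (monotone_of_mem_chainSet hx1 zero_le_one hτ)) i
  have hmeas : ∀ σ : Equiv.Perm (Fin m), MeasurableSet ((· ∘ σ) ⁻¹' chainSet x 1) := fun σ =>
    (isClosed_chainSet x 1).measurableSet.preimage (measurePreserving_comp_perm volume σ).measurable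
  rw [permutedChainSet, measure_iUnion₀ hdisj fun σ => (hmeas σ).nullMeasurableSet, tsum_fintype,
    Finset.sum_congr rfl fun σ _ => uniformCube_comp_perm_preimage_chainSet hx0 hx1 σ,
    Finset.sum_const, Finset.card_univ, Fintype.card_perm, Fintype.card_fin, nsmul_eq_mul,
    ← ENNReal.ofReal_natCast, ← ENNReal.ofReal_mul (Nat.cast_nonneg _),
    ← ENNReal.ofReal_prod_of_nonneg fun i _ => pow_nonneg (hx0 i) _]
  congr 1
  field_simp

end PermutedChainSet

section Independence

variable {Ω ι : Type*} [MeasurableSpace Ω] {μ : Measure Ω} [IsProbabilityMeasure μ] [Fintype ι]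
  {X : ι → Ω → ℝ}

lemma iIndepFun_of_measure_forall_le_eq_prod (hX : ∀ i, AEMeasurable (X i) μ)
    (h : ∀ a : ι → ℝ, μ {ω | ∀ i, X i ω ≤ a i} = ∏ i, μ {ω | X i ω ≤ a i}) :
    iIndepFun X μ := by
  let spanning : ∀ i, (μ.map (X i)).FiniteSpanningSetsIn (range Iic) := fun _ =>
    { set := fun n => Iic n
      set_mem := fun n => ⟨n, rfl⟩
      finite := fun _ => measure_lt_top _ _
      spanning := eq_univ_of_forall fun x => mem_iUnion.2 ⟨⌈x⌉₊, mem_Iic.2 (Nat.le_ceil x)⟩ }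
  rw [iIndepFun_iff_map_fun_eq_pi_map hX]
  refine (Measure.pi_eq_generateFrom (fun _ => (borel_eq_generateFrom_Iic ℝ).symm)
    (fun _ => isPiSystem_Iic) spanning fun s hs => ?_).symm
  choose a ha using hs
  obtain rfl : s = fun i => Iic (a i) := funext fun i => (ha i).symm
  rw [Measure.map_apply_of_aemeasurable (aemeasurable_pi_lambda _ hX)
    (MeasurableSet.univ_pi fun _ => measurableSet_Iic)]
  simp_rw [Measure.map_apply_of_aemeasurable (hX _) measurableSet_Iic]
  simpa [preimage, mem_univ_pi, Pi.le_def] using h a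

lemma le_coe_projIcc_iff {α : Type*} [LinearOrder α] {a b r : α} (hab : a ≤ b)
    (hr : r ∈ Ioc a b) (x : α) : r ≤ projIcc a b hab x ↔ r ≤ x := by
  rw [coe_projIcc, le_max_iff, le_min_iff]
  constructor
  · rintro (h | ⟨_, h⟩)
    · exact absurd h (not_le.2 hr.1)
    · exact h
  · exact fun h => Or.inr ⟨hr.2, h⟩

/-- Taking `x = 1` shows that the variables are at most `1`, so the distribution function at any
point is its value at the projection of that point to the cube. -/
lemma iIndepFun_of_measure_forall_le_eq_prod_on_unit_cube (hX : ∀ i, Measurable (X i))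
    (hpos : ∀ᵐ ω ∂μ, ∀ i, 0 < X i ω) {F : ι → ℝ → ENNReal} (hF : ∀ i, F i 1 = 1)
    (h : ∀ x : ι → ℝ, (∀ i, x i ∈ Icc 0 1) → μ {ω | ∀ i, X i ω ≤ x i} = ∏ i, F i (x i)) :
    iIndepFun X μ ∧ ∀ i, ∀ x ∈ Icc (0 : ℝ) 1, μ {ω | X i ω ≤ x} = F i x := by
  classical
  have hle : ∀ᵐ ω ∂μ, ∀ i, X i ω ≤ 1 := by
    rw [ae_iff_measure_eq, h (fun _ => 1) fun _ => right_mem_Icc.2 zero_le_one]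
    · simp [hF]
    · rw [ofPred_forall]
      exact (MeasurableSet.iInter fun i => measurableSet_le (hX i) measurable_const).nullMeasurableSet
  let c : ℝ → ℝ := fun b => projIcc 0 1 zero_le_one b
  have hjoint : ∀ a : ι → ℝ, μ {ω | ∀ i, X i ω ≤ a i} = ∏ i, F i (c (a i)) := fun a => by
    rw [← h _ fun i => (projIcc 0 1 zero_le_one (a i)).2]
    refine measure_congr (Filter.eventuallyEq_set.2 ?_)
    filter_upwards [hpos, hle] with ω hp hl
    simp only [le_coe_projIcc_iff zero_le_one ⟨hp _, hl _⟩]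
  have hmarg : ∀ i b, μ {ω | X i ω ≤ b} = F i (c b) := fun i b => by
    calc μ {ω | X i ω ≤ b} = μ {ω | ∀ j, X j ω ≤ update (fun _ => (1 : ℝ)) i b j} := by
          refine measure_congr (Filter.eventuallyEq_set.2 ?_)
          filter_upwards [hle] with ω hl
          refine ⟨fun hi j => ?_, fun hall => by simpa using hall i⟩
          rcases eq_or_ne j i with rfl | hj
          · simpa using hi
          · simpa [update_of_ne hj] using hl j
      _ = F i (c b) := by
          rw [hjoint, Fintype.prod_eq_single i fun j hj => by simp [c, update_of_ne hj, hF]]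
          simp
  refine ⟨iIndepFun_of_measure_forall_le_eq_prod (fun i => (hX i).aemeasurable) fun a => ?_,
    fun i x hx => by rw [hmarg, show c x = x from congrArg Subtype.val (projIcc_of_mem _ hx)]⟩
  simp only [hjoint, hmarg]

end Independence

section Sample

variable {Ω : Type*} [MeasurableSpace Ω] {μ : Measure Ω} {m : ℕ} {Z S : Ω → Fin m → ℝ}

lemma map_eq_uniformCube {ι : Type*} [Fintype ι] [IsProbabilityMeasure μ] {ζ : ι → Ω → ℝ}
    (hζmeas : ∀ i, Measurable (ζ i)) (hζindep : iIndepFun ζ μ)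
    (hζunif : ∀ i, μ.map (ζ i) = volume.restrict (Icc 0 1)) :
    μ.map (fun ω i => ζ i ω) = uniformCube ι := by
  rw [(iIndepFun_iff_map_fun_eq_pi_map fun i => (hζmeas i).aemeasurable).1 hζindep]
  simp_rw [hζunif]
  rfl

lemma ae_succRatio_pos (hZ : AEMeasurable Z μ) (hlaw : μ.map Z = uniformCube (Fin m))
    (hS : ∀ᵐ ω ∂μ, S ω = Z ω ∘ Tuple.sort (Z ω)) : ∀ᵐ ω ∂μ, ∀ i, 0 < succRatio (S ω) i := by
  filter_upwards [ae_of_ae_map hZ (hlaw ▸ ae_pos_uniformCube), hS] with ω hZpos hSω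
  exact succRatio_pos (hSω ▸ fun j => hZpos _)

lemma measure_forall_succRatio_le (hZ : Measurable Z) (hlaw : μ.map Z = uniformCube (Fin m))
    (hS : ∀ᵐ ω ∂μ, S ω = Z ω ∘ Tuple.sort (Z ω)) {x : Fin m → ℝ} (hx : ∀ i, x i ∈ Icc 0 1) :
    μ {ω | ∀ i, succRatio (S ω) i ≤ x i} = ∏ i, ENNReal.ofReal (x i ^ ((i : ℕ) + 1)) := by
  rw [← uniformCube_permutedChainSet (fun i => (hx i).1) (fun i => (hx i).2), ← hlaw,
    Measure.map_apply hZ (measurableSet_permutedChainSet x 1)]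
  refine measure_congr (Filter.eventuallyEq_set.2 ?_)
  filter_upwards [ae_of_ae_map hZ.aemeasurable (hlaw ▸ ae_pos_uniformCube), hS] with ω hZpos hSω
  rw [mem_preimage, hSω]
  exact forall_succRatio_comp_sort_le_iff hZpos fun i => (hx i).2

end Sample

end UniformOrderStatistics

open UniformOrderStatistics

theorem ratios_of_order_statistics_uniform_general
    {Ω : Type*} [MeasureSpace Ω] [IsProbabilityMeasure (ℙ : Measure Ω)]
    (m : ℕ)
    (ζ : Fin m → Ω → ℝ) (hζmeas : ∀ i, Measurable (ζ i))
    (hζindep : iIndepFun ζ ℙ)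
    (hζunif : ∀ i, Measure.map (ζ i) ℙ = (volume : Measure ℝ).restrict (Set.Icc (0 : ℝ) 1))
    -- `ξ` is the family of order statistics of `ζ`: pointwise a monotone
    -- rearrangement of the `ζ`'s
    (ξ : Fin m → Ω → ℝ) (hξmeas : ∀ i, Measurable (ξ i))
    (hξsort : ∀ᵐ ω ∂(ℙ : Measure Ω), Monotone (fun i => ξ i ω) ∧
      ∃ σ : Equiv.Perm (Fin m), ∀ i, ξ i ω = ζ (σ i) ω)
    -- the combined family: `g i = η_{i+1} = ξ_i / ξ_{i+1}` for `i + 1 < m`, and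
    -- `g (m-1) = ξ_m`, the last order statistic
    (g : Fin m → Ω → ℝ)
    (hg : ∀ (i : Fin m) ω, g i ω =
      if h : (i : ℕ) + 1 < m then ξ i ω / ξ ⟨(i : ℕ) + 1, h⟩ ω else ξ i ω) :
    iIndepFun g ℙ ∧
      ∀ (i : Fin m), (i : ℕ) + 1 < m → ∀ x ∈ Set.Icc (0 : ℝ) 1,
        ℙ {ω | g i ω ≤ x} = ENNReal.ofReal (x ^ ((i : ℕ) + 1)) := by
  have hlaw := map_eq_uniformCube hζmeas hζindep hζunif
  have hZ : Measurable fun ω i => ζ i ω := measurable_pi_lambda _ hζmeas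
  have hsorted : ∀ᵐ ω ∂ℙ, (fun i => ξ i ω) = (fun i => ζ i ω) ∘ Tuple.sort fun i => ζ i ω := by
    filter_upwards [hξsort] with ω ⟨hmono, σ, hσ⟩
    obtain hξσ : (fun i => ξ i ω) = (fun i => ζ i ω) ∘ σ := funext hσ
    exact hξσ.trans (Tuple.comp_sort_eq_comp_iff_monotone.2 (hξσ ▸ hmono))
  obtain rfl : g = fun i ω => succRatio (fun j => ξ j ω) i :=
    funext₂ fun i ω => by rw [hg, succRatio_apply]
  obtain ⟨hindep, hmarg⟩ := iIndepFun_of_measure_forall_le_eq_prod_on_unit_cube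
    (fun i => (measurable_succRatio i).comp (measurable_pi_lambda _ hξmeas))
    (ae_succRatio_pos hZ.aemeasurable hlaw hsorted)
    (F := fun i x => ENNReal.ofReal (x ^ ((i : ℕ) + 1))) (by simp)
    fun x hx => measure_forall_succRatio_le hZ hlaw hsorted hx
  exact ⟨hindep, fun i _ => hmarg i⟩

/-- independence of successive ratios of order statistics for uniform
variables. Let `ξ₁ ≤ ⋯ ≤ ξ_m` be the order statistics of `m` independent random
variables uniformly distributed on `[0,1]`. Then the ratios `η_i = ξ_i / ξ_{i+1}`
(`i = 1, …, m−1`) together with `ξ_m` are mutually independent, and `η_i` has CDF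
`x ↦ x^i` on `[0,1]` (density proportional to `x^{i-1}`). -/
theorem ratios_of_order_statistics_uniform
    {Ω : Type*} [MeasureSpace Ω] [IsProbabilityMeasure (ℙ : Measure Ω)]
    (m : ℕ) (hm : 0 < m)
    (ζ : Fin m → Ω → ℝ) (hζmeas : ∀ i, Measurable (ζ i))
    (hζindep : iIndepFun ζ ℙ)
    (hζunif : ∀ i, Measure.map (ζ i) ℙ = (volume : Measure ℝ).restrict (Set.Icc (0 : ℝ) 1))
    -- `ξ` is the family of order statistics of `ζ`: pointwise a monotone
    -- rearrangement of the `ζ`'s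
    (ξ : Fin m → Ω → ℝ) (hξmeas : ∀ i, Measurable (ξ i))
    (hξsort : ∀ᵐ ω ∂(ℙ : Measure Ω), Monotone (fun i => ξ i ω) ∧
      ∃ σ : Equiv.Perm (Fin m), ∀ i, ξ i ω = ζ (σ i) ω)
    -- the combined family: `g i = η_{i+1} = ξ_i / ξ_{i+1}` for `i + 1 < m`, and
    -- `g (m-1) = ξ_m`, the last order statistic
    (g : Fin m → Ω → ℝ)
    (hg : ∀ (i : Fin m) ω, g i ω =
      if h : (i : ℕ) + 1 < m then ξ i ω / ξ ⟨(i : ℕ) + 1, h⟩ ω else ξ i ω) :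
    iIndepFun g ℙ ∧
      ∀ (i : Fin m), (i : ℕ) + 1 < m → ∀ x ∈ Set.Icc (0 : ℝ) 1,
        ℙ {ω | g i ω ≤ x} = ENNReal.ofReal (x ^ ((i : ℕ) + 1)) :=
  ratios_of_order_statistics_uniform_general m ζ hζmeas hζindep hζunif ξ hξmeas hξsort g hg
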